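/- arXiv:2011.03145 — 3 statements merged into one kernel-verified Lean document; each statement's English description precedes it below -/
import Mathlib

section
/- If a bounded positive-semidefinite operator Δ satisfies F[Δ] = Δ for a fuzzy map F = Σ_{P∈A} p_P P · P† with all p_P > 0, then P Δ P† = Δ for every permutation P in the group generated by A. -/
open Matrix ComplexOrder

/-- Permutation unitary on `(ℂ^d)^{⊗n}`. -/
noncomputable def permM (n d : ℕ) (σ : Equiv.Perm (Fin n)) :
    Matrix (Fin n → Fin d) (Fin n → Fin d) ℂ :=
  fun x y => if x = y ∘ σ then 1 else 0

lemma reindex_sum {M : Type*} [AddCommMonoid M] (n d : ℕ) (σ : Equiv.Perm (Fin n))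
    (f : (Fin n → Fin d) → M) : ∑ i, f (i ∘ ⇑σ⁻¹) = ∑ i, f i := by
  exact Fintype.sum_bijective (fun g : Fin n → Fin d => g ∘ ⇑σ⁻¹)
    (Equiv.bijective ⟨fun g => g ∘ ⇑σ⁻¹, fun g => g ∘ ⇑σ,
      fun g => by funext x; simp, fun g => by funext x; simp⟩)
    _ _ (fun g => rfl)

lemma conj_apply (n d : ℕ) (σ : Equiv.Perm (Fin n)) (X : Matrix (Fin n → Fin d) (Fin n → Fin d) ℂ)
    (i j : Fin n → Fin d) :
    (permM n d σ * X * (permM n d σ)ᴴ) i j = X (i ∘ ⇑σ⁻¹) (j ∘ ⇑σ⁻¹) := by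
  have key : ∀ (a y : Fin n → Fin d), (a = y ∘ ⇑σ) = (y = a ∘ ⇑σ⁻¹) := by
    intro a y
    apply propext; constructor
    · rintro rfl; funext x; simp
    · rintro rfl; funext x; simp
  simp only [mul_apply, conjTranspose_apply, permM, key, apply_ite (star : ℂ → ℂ), star_one,
    star_zero, ite_mul, mul_ite, one_mul, zero_mul, mul_one, mul_zero, Finset.sum_ite_eq,
    Finset.sum_ite_eq', Finset.mem_univ, if_true]

/-- if a positive-semidefinite operator `Δ` is invariant under the fuzzy map
`F = Σ_{P∈A} p_P P · P†` with all `p_P > 0`, then it is invariant under every permutation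
in the group generated by `A`. -/
theorem stmt6 (n d : ℕ) (A : Finset (Equiv.Perm (Fin n))) (p : Equiv.Perm (Fin n) → ℝ)
    (hp : ∀ σ ∈ A, 0 < p σ) (hsum : ∑ σ ∈ A, p σ = 1)
    (Δ : Matrix (Fin n → Fin d) (Fin n → Fin d) ℂ) (hΔ : Δ.PosSemidef)
    (hinv : ∑ σ ∈ A, (p σ : ℂ) • (permM n d σ * Δ * (permM n d σ)ᴴ) = Δ) :
    ∀ σ ∈ Subgroup.closure (A : Set (Equiv.Perm (Fin n))),
      permM n d σ * Δ * (permM n d σ)ᴴ = Δ := by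
  -- entrywise invariance under the fuzzy map
  have hinv' : ∀ i j, ∑ σ ∈ A, (p σ : ℂ) * Δ (i ∘ ⇑σ⁻¹) (j ∘ ⇑σ⁻¹) = Δ i j := by
    intro i j
    have h := congrFun (congrFun hinv i) j
    simpa [Matrix.sum_apply, Matrix.smul_apply, conj_apply, smul_eq_mul] using h
  set N : ℝ := ∑ i, ∑ j, Complex.normSq (Δ i j) with hN
  -- reindexing invariance of the norm
  have hre : ∀ σ : Equiv.Perm (Fin n),
      ∑ i, ∑ j, Complex.normSq (Δ (i ∘ ⇑σ⁻¹) (j ∘ ⇑σ⁻¹)) = N := by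
    intro σ
    rw [reindex_sum n d σ (fun g => ∑ j, Complex.normSq (Δ g (j ∘ ⇑σ⁻¹)))]
    refine Finset.sum_congr rfl fun i _ => ?_
    exact reindex_sum n d σ (fun g => Complex.normSq (Δ i g))
  have hcross2 : ∑ σ ∈ A, p σ *
      (∑ i, ∑ j, (Δ i j * (starRingEnd ℂ) (Δ (i ∘ ⇑σ⁻¹) (j ∘ ⇑σ⁻¹))).re) = N := by
    have : ∀ σ ∈ A, p σ *
        (∑ i, ∑ j, (Δ i j * (starRingEnd ℂ) (Δ (i ∘ ⇑σ⁻¹) (j ∘ ⇑σ⁻¹))).re)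
        = (∑ i, ∑ j, ((p σ : ℂ) * (Δ i j * (starRingEnd ℂ) (Δ (i ∘ ⇑σ⁻¹) (j ∘ ⇑σ⁻¹))))).re := by
      intro σ _
      simp only [← Complex.re_sum]
      rw [← Complex.re_ofReal_mul]
      congr 1
      rw [Finset.mul_sum]
      exact Finset.sum_congr rfl fun i _ => Finset.mul_sum _ _ _
    rw [Finset.sum_congr rfl this, ← Complex.re_sum]
    have : ∑ σ ∈ A, ∑ i, ∑ j, ((p σ : ℂ) * (Δ i j * (starRingEnd ℂ) (Δ (i ∘ ⇑σ⁻¹) (j ∘ ⇑σ⁻¹))))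
        = ∑ i, ∑ j, Δ i j * (starRingEnd ℂ) (Δ i j) := by
      rw [Finset.sum_comm]
      refine Finset.sum_congr rfl fun i _ => ?_
      rw [Finset.sum_comm]
      refine Finset.sum_congr rfl fun j _ => ?_
      calc ∑ σ ∈ A, (p σ : ℂ) * (Δ i j * (starRingEnd ℂ) (Δ (i ∘ ⇑σ⁻¹) (j ∘ ⇑σ⁻¹)))
          = Δ i j * (starRingEnd ℂ) (∑ σ ∈ A, (p σ : ℂ) * Δ (i ∘ ⇑σ⁻¹) (j ∘ ⇑σ⁻¹)) := by
            rw [map_sum, Finset.mul_sum]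
            refine Finset.sum_congr rfl fun σ _ => ?_
            rw [map_mul (starRingEnd ℂ), Complex.conj_ofReal]; ring
        _ = Δ i j * (starRingEnd ℂ) (Δ i j) := by rw [hinv']
    rw [this]
    simp [Complex.re_sum, Complex.mul_conj, hN]
  -- total sum of deviations is zero
  have hzero : ∑ σ ∈ A, p σ *
      (∑ i, ∑ j, Complex.normSq (Δ i j - Δ (i ∘ ⇑σ⁻¹) (j ∘ ⇑σ⁻¹))) = 0 := by
    have expand : ∀ σ ∈ A, p σ *
        (∑ i, ∑ j, Complex.normSq (Δ i j - Δ (i ∘ ⇑σ⁻¹) (j ∘ ⇑σ⁻¹)))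
        = p σ * (2 * N) - 2 * (p σ *
          (∑ i, ∑ j, (Δ i j * (starRingEnd ℂ) (Δ (i ∘ ⇑σ⁻¹) (j ∘ ⇑σ⁻¹))).re)) := by
      intro σ _
      have : (∑ i, ∑ j, Complex.normSq (Δ i j - Δ (i ∘ ⇑σ⁻¹) (j ∘ ⇑σ⁻¹)))
          = N + N - 2 * (∑ i, ∑ j, (Δ i j * (starRingEnd ℂ) (Δ (i ∘ ⇑σ⁻¹) (j ∘ ⇑σ⁻¹))).re) := by
        have : ∀ i j, Complex.normSq (Δ i j - Δ (i ∘ ⇑σ⁻¹) (j ∘ ⇑σ⁻¹))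
            = Complex.normSq (Δ i j) + Complex.normSq (Δ (i ∘ ⇑σ⁻¹) (j ∘ ⇑σ⁻¹))
              - 2 * (Δ i j * (starRingEnd ℂ) (Δ (i ∘ ⇑σ⁻¹) (j ∘ ⇑σ⁻¹))).re := by
          intro i j
          exact Complex.normSq_sub _ _
        simp_rw [this, Finset.sum_sub_distrib, Finset.sum_add_distrib, ← Finset.mul_sum]
        rw [hre σ]
      rw [this]; ring
    rw [Finset.sum_congr rfl expand, Finset.sum_sub_distrib, ← Finset.sum_mul, hsum,
      ← Finset.mul_sum, hcross2]
    ring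
  -- each generator fixes Δ
  have hgen : ∀ σ ∈ A, ∀ i j, Δ (i ∘ ⇑σ⁻¹) (j ∘ ⇑σ⁻¹) = Δ i j := by
    intro σ hσ i j
    have hnn : ∀ τ ∈ A, 0 ≤ p τ *
        (∑ i, ∑ j, Complex.normSq (Δ i j - Δ (i ∘ ⇑τ⁻¹) (j ∘ ⇑τ⁻¹))) := by
      intro τ hτ
      exact mul_nonneg (hp τ hτ).le (Finset.sum_nonneg fun _ _ =>
        Finset.sum_nonneg fun _ _ => Complex.normSq_nonneg _)
    have h0 := (Finset.sum_eq_zero_iff_of_nonneg hnn).mp hzero σ hσ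
    have hT : (∑ i, ∑ j, Complex.normSq (Δ i j - Δ (i ∘ ⇑σ⁻¹) (j ∘ ⇑σ⁻¹))) = 0 := by
      rcases mul_eq_zero.mp h0 with h | h
      · exact absurd h (hp σ hσ).ne'
      · exact h
    have hnn2 : ∀ i ∈ (Finset.univ : Finset (Fin n → Fin d)),
        0 ≤ ∑ j, Complex.normSq (Δ i j - Δ (i ∘ ⇑σ⁻¹) (j ∘ ⇑σ⁻¹)) :=
      fun _ _ => Finset.sum_nonneg fun _ _ => Complex.normSq_nonneg _
    have h1 := (Finset.sum_eq_zero_iff_of_nonneg hnn2).mp hT i (Finset.mem_univ i)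
    have h2 := (Finset.sum_eq_zero_iff_of_nonneg
      (fun _ _ => Complex.normSq_nonneg _)).mp h1 j (Finset.mem_univ j)
    have := Complex.normSq_eq_zero.mp h2
    exact (sub_eq_zero.mp this).symm
  -- extend to the generated subgroup
  have main : ∀ τ ∈ Subgroup.closure (A : Set (Equiv.Perm (Fin n))),
      ∀ i j, Δ (i ∘ ⇑τ⁻¹) (j ∘ ⇑τ⁻¹) = Δ i j := by
    intro τ hτ
    induction hτ using Subgroup.closure_induction with
    | mem x hx => exact hgen x hx
    | one => intro i j; simp
    | mul a b ha hb iha ihb =>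
        intro i j
        have e1 : i ∘ ⇑(a * b)⁻¹ = (i ∘ ⇑b⁻¹) ∘ ⇑a⁻¹ := by funext x; simp [_root_.mul_inv_rev]
        have e2 : j ∘ ⇑(a * b)⁻¹ = (j ∘ ⇑b⁻¹) ∘ ⇑a⁻¹ := by funext x; simp [_root_.mul_inv_rev]
        rw [e1, e2, iha (i ∘ ⇑b⁻¹) (j ∘ ⇑b⁻¹), ihb i j]
    | inv a ha iha =>
        intro i j
        have h := iha (i ∘ ⇑a) (j ∘ ⇑a)
        have e1 : (i ∘ ⇑a) ∘ ⇑a⁻¹ = i := by funext x; simp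
        have e2 : (j ∘ ⇑a) ∘ ⇑a⁻¹ = j := by funext x; simp
        rw [e1, e2] at h
        simpa [inv_inv] using h.symm
  intro σ hσ
  ext i j
  rw [conj_apply]
  exact main σ hσ i j
end

section
/- For a fuzzy map F = Σ_P p_P P · P† and positive-semidefinite Δ with F[Δ] = Δ, the purity is preserved and Tr(F[Δ]²) = Σ_{Q∈A'} q_Q Tr(Q Δ Q† Δ) where the q_Q form a probability distribution over the set A' of pairwise products P₁P₂⁻¹ of permutations in A. -/
open Matrix ComplexOrder

lemma permM_mul (n d : ℕ) (σ τ : Equiv.Perm (Fin n)) :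
    permM n d σ * permM n d τ = permM n d (τ * σ) := by
  ext x y
  simp only [permM, mul_apply]
  rw [Finset.sum_eq_single (y ∘ τ)]
  · rw [if_pos rfl, mul_one]
    have : (y ∘ ⇑τ) ∘ ⇑σ = y ∘ ⇑(τ * σ) := rfl
    rw [this]
  · intro b _ hb
    rw [if_neg hb, mul_zero]
  · simp

lemma permM_conjTranspose (n d : ℕ) (σ : Equiv.Perm (Fin n)) :
    (permM n d σ)ᴴ = permM n d σ⁻¹ := by
  ext x y
  have key : (y = x ∘ ⇑σ) ↔ (x = y ∘ ⇑σ⁻¹) := by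
    constructor
    · rintro rfl; funext i; simp
    · rintro rfl; funext i; simp
  simp [permM, conjTranspose_apply, key, apply_ite]

/-- for a fuzzy map `F = Σ_{P∈A} p_P P · P†` and positive-semidefinite `Δ`
with `F[Δ] = Δ`, the purity is preserved, and `Tr(F[Δ]²)` is a convex combination
`Σ q Tr(Q Δ Q† Δ)` over the pairwise products `Q = P₁ P₂⁻¹` of permutations in `A`. -/
theorem stmt9 (n d : ℕ) (A : Finset (Equiv.Perm (Fin n))) (p : Equiv.Perm (Fin n) → ℝ)
    (hp : ∀ σ ∈ A, 0 ≤ p σ) (hsum : ∑ σ ∈ A, p σ = 1)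
    (Δ : Matrix (Fin n → Fin d) (Fin n → Fin d) ℂ) (hΔ : Δ.PosSemidef)
    (hinv : ∑ σ ∈ A, (p σ : ℂ) • (permM n d σ * Δ * (permM n d σ)ᴴ) = Δ) :
    ((∑ σ ∈ A, (p σ : ℂ) • (permM n d σ * Δ * (permM n d σ)ᴴ)) *
        (∑ σ ∈ A, (p σ : ℂ) • (permM n d σ * Δ * (permM n d σ)ᴴ))).trace = (Δ * Δ).trace
    ∧ ∃ q : Equiv.Perm (Fin n) × Equiv.Perm (Fin n) → ℝ,
        (∀ x ∈ A ×ˢ A, 0 ≤ q x) ∧ (∑ x ∈ A ×ˢ A, q x = 1) ∧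
        ((∑ σ ∈ A, (p σ : ℂ) • (permM n d σ * Δ * (permM n d σ)ᴴ)) *
            (∑ σ ∈ A, (p σ : ℂ) • (permM n d σ * Δ * (permM n d σ)ᴴ))).trace
          = ∑ x ∈ A ×ˢ A, (q x : ℂ) *
              (permM n d (x.1 * x.2⁻¹) * Δ * (permM n d (x.1 * x.2⁻¹))ᴴ * Δ).trace := by
  constructor
  · rw [hinv]
  · refine ⟨fun x => p x.1 * p x.2, fun x hx => ?_, ?_, ?_⟩
    · obtain ⟨h1, h2⟩ := Finset.mem_product.1 hx
      exact mul_nonneg (hp _ h1) (hp _ h2)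
    · rw [Finset.sum_product, ← Finset.sum_mul_sum, hsum, mul_one]
    · rw [Finset.sum_mul_sum, trace_sum, Finset.sum_product]
      refine Finset.sum_congr rfl fun σ1 _ => ?_
      rw [trace_sum]
      refine Finset.sum_congr rfl fun σ2 _ => ?_
      rw [smul_mul_assoc, mul_smul_comm, smul_smul, trace_smul, smul_eq_mul]
      push_cast
      have e : (permM n d σ1 * Δ * (permM n d σ1)ᴴ) * (permM n d σ2 * Δ * (permM n d σ2)ᴴ) =
          (permM n d σ1 * Δ * (permM n d σ1)ᴴ * permM n d σ2 * Δ) * (permM n d σ2)ᴴ := by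
        simp only [mul_assoc]
      have h1 : permM n d σ2⁻¹ * permM n d σ1 = permM n d (σ1 * σ2⁻¹) := permM_mul n d _ _
      have h2 : permM n d σ1⁻¹ * permM n d σ2 = permM n d (σ1 * σ2⁻¹)⁻¹ := by
        rw [permM_mul]
        have : σ2 * σ1⁻¹ = (σ1 * σ2⁻¹)⁻¹ := by group
        rw [this]
      have e2 : (permM n d σ2)ᴴ * (permM n d σ1 * Δ * (permM n d σ1)ᴴ * permM n d σ2 * Δ) =
          permM n d (σ1 * σ2⁻¹) * Δ * (permM n d (σ1 * σ2⁻¹))ᴴ * Δ := by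
        rw [permM_conjTranspose, permM_conjTranspose, permM_conjTranspose, ← h1, ← h2]
        simp only [mul_assoc]
      rw [e, trace_mul_comm, e2]
end

section
/- A linear operator Δ on (ℂ^d)^{⊗n} is invariant under a generic fuzzy map F (all permutation weights positive) if and only if Δ is invariant under every permutation unitary: F[Δ] = Δ ⟺ P_σ Δ P_σ† = Δ for all σ ∈ S_n. -/
open Matrix

lemma permM_conj_apply (n d : ℕ) (σ : Equiv.Perm (Fin n))
    (Δ : Matrix (Fin n → Fin d) (Fin n → Fin d) ℂ) (x y : Fin n → Fin d) :
    (permM n d σ * Δ * (permM n d σ)ᴴ) x y = Δ (x ∘ ⇑σ⁻¹) (y ∘ ⇑σ⁻¹) := by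
  have hx : ∀ c : Fin n → Fin d, x = c ∘ ⇑σ ↔ c = x ∘ ⇑σ⁻¹ := by
    intro c
    constructor
    · intro h; funext i; simp [h]
    · intro h; funext i; simp [h]
  have hy : ∀ c : Fin n → Fin d, y = c ∘ ⇑σ ↔ c = y ∘ ⇑σ⁻¹ := by
    intro c
    constructor
    · intro h; funext i; simp [h]
    · intro h; funext i; simp [h]
  simp only [Matrix.mul_apply, Matrix.conjTranspose_apply, permM]
  rw [Finset.sum_eq_single (y ∘ ⇑σ⁻¹)]
  · rw [if_pos ((hy _).2 rfl)]
    simp only [star_one, mul_one]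
    rw [Finset.sum_eq_single (x ∘ ⇑σ⁻¹)]
    · rw [if_pos ((hx _).2 rfl), one_mul]
    · intro b _ hb
      rw [if_neg (fun h => hb ((hx b).1 h)), zero_mul]
    · intro h; exact absurd (Finset.mem_univ _) h
  · intro b _ hb
    rw [if_neg (fun h => hb ((hy b).1 h))]
    simp
  · intro h; exact absurd (Finset.mem_univ _) h

lemma const_of_avg {G : Type*} [Group G] [Fintype G] (p : G → ℝ)
    (hp : ∀ σ, 0 < p σ) (hsum : ∑ σ, p σ = 1) (r : G → ℝ)
    (h : ∀ τ, ∑ σ, p σ * r (τ * σ⁻¹) = r τ) : ∀ τ, r τ = r 1 := by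
  obtain ⟨τ₀, -, hmax⟩ := Finset.exists_max_image Finset.univ r ⟨1, Finset.mem_univ 1⟩
  have key : ∀ σ : G, r (τ₀ * σ⁻¹) = r τ₀ := by
    have hz : ∑ σ : G, p σ * (r τ₀ - r (τ₀ * σ⁻¹)) = 0 := by
      simp only [mul_sub, Finset.sum_sub_distrib, h τ₀, ← Finset.sum_mul, hsum, one_mul,
        sub_self]
    have := (Finset.sum_eq_zero_iff_of_nonneg (fun σ _ =>
      mul_nonneg (hp σ).le (sub_nonneg.2 (hmax _ (Finset.mem_univ _))))).1 hz
    intro σ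
    have h0 := this σ (Finset.mem_univ σ)
    have := mul_eq_zero.1 h0
    rcases this with h1 | h1
    · exact absurd h1 (hp σ).ne'
    · linarith [sub_eq_zero.1 h1]
  intro τ
  have h1 : r τ = r τ₀ := by
    have := key (τ⁻¹ * τ₀)
    simpa using this
  have h2 : r 1 = r τ₀ := by
    have := key τ₀
    simpa using this
  rw [h1, h2]

lemma const_of_avg_c {G : Type*} [Group G] [Fintype G] (p : G → ℝ)
    (hp : ∀ σ, 0 < p σ) (hsum : ∑ σ, p σ = 1) (f : G → ℂ)
    (h : ∀ τ, ∑ σ, (p σ : ℂ) * f (τ * σ⁻¹) = f τ) : ∀ τ, f τ = f 1 := by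
  have hre : ∀ τ, (f τ).re = (f 1).re := by
    apply const_of_avg p hp hsum
    intro τ
    have := congrArg Complex.re (h τ)
    simpa [Complex.re_sum] using this
  have him : ∀ τ, (f τ).im = (f 1).im := by
    apply const_of_avg p hp hsum
    intro τ
    have := congrArg Complex.im (h τ)
    simpa [Complex.im_sum] using this
  intro τ
  exact Complex.ext (hre τ) (him τ)

/-- a linear operator `Δ` is invariant under a generic fuzzy map `F`
(all permutation weights positive) iff it is invariant under every permutation unitary. -/
theorem stmt18 (n d : ℕ) (p : Equiv.Perm (Fin n) → ℝ)
    (hp : ∀ σ, 0 < p σ) (hsum : ∑ σ, p σ = 1)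
    (Δ : Matrix (Fin n → Fin d) (Fin n → Fin d) ℂ) :
    (∑ σ, (p σ : ℂ) • (permM n d σ * Δ * (permM n d σ)ᴴ)) = Δ
      ↔ ∀ σ : Equiv.Perm (Fin n), permM n d σ * Δ * (permM n d σ)ᴴ = Δ := by
  constructor
  · intro hF σ₀
    ext x y
    rw [permM_conj_apply]
    have key : ∀ τ : Equiv.Perm (Fin n),
        (fun τ : Equiv.Perm (Fin n) => Δ (x ∘ ⇑τ) (y ∘ ⇑τ)) τ
          = (fun τ : Equiv.Perm (Fin n) => Δ (x ∘ ⇑τ) (y ∘ ⇑τ)) 1 := by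
      apply const_of_avg_c p hp hsum
      intro τ
      have := congrArg (fun M : Matrix (Fin n → Fin d) (Fin n → Fin d) ℂ =>
        M (x ∘ ⇑τ) (y ∘ ⇑τ)) hF
      simp only [Matrix.sum_apply, Matrix.smul_apply, smul_eq_mul, permM_conj_apply] at this
      rw [← this]
      refine Finset.sum_congr rfl fun σ _ => ?_
      congr 1
    have h1 := key σ₀⁻¹
    simpa using h1
  · intro hinv
    have h1 : (∑ σ, (p σ : ℂ) • (permM n d σ * Δ * (permM n d σ)ᴴ))
        = (∑ σ, (p σ : ℂ)) • Δ := by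
      rw [Finset.sum_smul]
      exact Finset.sum_congr rfl fun σ _ => by rw [hinv σ]
    rw [h1]
    have : (∑ σ, (p σ : ℂ)) = 1 := by
      rw [← Complex.ofReal_sum, hsum, Complex.ofReal_one]
    rw [this, one_smul]
end
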